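/- There exists a tensor A and a tensor B such that A is a subtensor of B and rank_⊥(B) < rank_⊥(A): concretely, if A = [[V^{(1)},…,V^{(N)}]] with each V^{(n)} ∈ ℝ^{Iₙ × R} of full column rank R ≥ 2, the Hadamard product of the Gram matrices not diagonal, and the decomposition unique (so rank_⊥(A) > R), then B = [[V, V^{(2)},…,V^{(N)}]] with V = [V^{(1)}; M], MᵀM = t·I − V^{(1)T}V^{(1)} (t large), contains A as the subtensor obtained by restricting the first index to 1,…,I₁, and satisfies rank_⊥(B) = R < rank_⊥(A). -/

import Mathlib

open scoped BigOperators

/-- Outer product with the first mode displayed separately: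
`(u ⊗ v¹ ⊗ ⋯ ⊗ vᴺ)_{x,j} = u_x ∏ n, vⁿ_{j n}`. -/
noncomputable def outer2 {i₁ N : ℕ} {K : Fin N → ℕ}
    (u : EuclideanSpace ℝ (Fin i₁))
    (v : (n : Fin N) → EuclideanSpace ℝ (Fin (K n))) :
    EuclideanSpace ℝ (Fin i₁ × ((n : Fin N) → Fin (K n))) :=
  (WithLp.equiv 2 _).symm (fun p => u p.1 * ∏ n, v n (p.2 n))

/-- The orthogonal rank (first mode displayed separately). -/
noncomputable def orank2 {i₁ N : ℕ} {K : Fin N → ℕ}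
    (A : EuclideanSpace ℝ (Fin i₁ × ((n : Fin N) → Fin (K n)))) : ℕ :=
  sInf {R : ℕ | ∃ u : Fin R → EuclideanSpace ℝ (Fin i₁),
    ∃ v : Fin R → (n : Fin N) → EuclideanSpace ℝ (Fin (K n)),
    A = ∑ r, outer2 (u r) (v r) ∧
    ∀ s t : Fin R, s ≠ t →
      (inner ℝ (outer2 (u s) (v s)) (outer2 (u t) (v t)) : ℝ) = 0}

section Aux

variable {N : ℕ} {K : Fin N → ℕ}

lemma sum_apply' {ι β : Type*} [Fintype β] (s : Finset ι)
    (f : ι → EuclideanSpace ℝ β) (p : β) :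
    (∑ r ∈ s, f r) p = ∑ r ∈ s, f r p := by
  induction s using Finset.cons_induction with
  | empty => rfl
  | cons a s ha ih => rw [Finset.sum_cons, Finset.sum_cons, ← ih]; rfl

lemma outer2_apply {i₁ : ℕ} (u : EuclideanSpace ℝ (Fin i₁))
    (v : (n : Fin N) → EuclideanSpace ℝ (Fin (K n))) (p) :
    outer2 u v p = u p.1 * ∏ n, v n (p.2 n) := rfl

lemma inner_outer2 {i₁ : ℕ} (u u' : EuclideanSpace ℝ (Fin i₁))
    (v v' : (n : Fin N) → EuclideanSpace ℝ (Fin (K n))) :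
    (inner ℝ (outer2 u v) (outer2 u' v') : ℝ)
      = (inner ℝ u u' : ℝ) * ∏ n, (inner ℝ (v n) (v' n) : ℝ) := by
  rw [real_inner_comm (outer2 u' v'), real_inner_comm u',
    Finset.prod_congr rfl fun n _ => real_inner_comm (v' n) (v n)]
  simp only [PiLp.inner_apply, RCLike.inner_apply, starRingEnd_apply, star_trivial,
    outer2_apply]
  rw [Fintype.sum_prod_type]
  have : ∀ x : Fin i₁, ∑ j : (n : Fin N) → Fin (K n),
      (u (x, j).1 * ∏ n, v n (j n)) * (u' (x, j).1 * ∏ n, v' n (j n))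
      = (u x * u' x) * ∑ j : (n : Fin N) → Fin (K n), ∏ n, (v n (j n) * v' n (j n)) := by
    intro x
    rw [Finset.mul_sum]
    congr 1; funext j
    rw [Finset.prod_mul_distrib]; ring
  rw [Finset.sum_congr rfl fun x _ => this x, ← Finset.sum_mul]
  congr 1
  rw [Finset.prod_univ_sum, Fintype.piFinset_univ]

lemma prod_indep {R : ℕ} (n₀ : Fin N)
    (v : Fin R → (n : Fin N) → EuclideanSpace ℝ (Fin (K n)))
    (hv : ∀ n, LinearIndependent ℝ (fun r : Fin R => v r n)) :
    LinearIndependent ℝ (fun r : Fin R => fun j : (n : Fin N) → Fin (K n) =>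
      ∏ n, v r n (j n)) := by
  rw [Fintype.linearIndependent_iff]
  intro g hg r
  have hex : ∀ (r' : Fin R) (n : Fin N), ∃ k, v r' n k ≠ 0 := by
    intro r' n
    by_contra h
    push_neg at h
    exact (hv n).ne_zero r' (PiLp.ext h)
  choose kk hkk using hex
  set j' : (n : Fin N) → Fin (K n) := fun n => kk r n with hj'
  have key : ∀ k : Fin (K n₀),
      ∑ r' : Fin R, (g r' * ∏ n ∈ Finset.univ.erase n₀, v r' n (j' n)) * v r' n₀ k = 0 := by
    intro k
    have h2 := congrFun hg (Function.update j' n₀ k)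
    simp only [Finset.sum_apply, Pi.smul_apply, smul_eq_mul, Pi.zero_apply] at h2
    rw [← h2]
    refine Finset.sum_congr rfl fun r' _ => ?_
    have hprod : ∏ n, v r' n (Function.update j' n₀ k n)
        = v r' n₀ k * ∏ n ∈ Finset.univ.erase n₀, v r' n (j' n) := by
      rw [← Finset.mul_prod_erase Finset.univ _ (Finset.mem_univ n₀), Function.update_self]
      congr 1
      refine Finset.prod_congr rfl fun n hn => ?_
      rw [Function.update_of_ne (Finset.ne_of_mem_erase hn)]
    rw [hprod]; ring
  have hcoef : g r * ∏ n ∈ Finset.univ.erase n₀, v r n (j' n) = 0 := by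
    refine (Fintype.linearIndependent_iff.mp (hv n₀))
      (fun r' => g r' * ∏ n ∈ Finset.univ.erase n₀, v r' n (j' n)) ?_ r
    ext k
    have := key k
    rw [sum_apply']
    simpa using this
  have hP : (∏ n ∈ Finset.univ.erase n₀, v r n (j' n)) ≠ 0 := by
    rw [Finset.prod_ne_zero_iff]
    intro n _
    exact hkk r n
  exact (mul_eq_zero.mp hcoef).resolve_right hP

lemma rank_lb {m R R' : ℕ}
    (w : Fin R → EuclideanSpace ℝ (Fin m))
    (v : Fin R → (n : Fin N) → EuclideanSpace ℝ (Fin (K n)))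
    (hw : LinearIndependent ℝ w)
    (hc : LinearIndependent ℝ (fun r : Fin R => fun j : (n : Fin N) → Fin (K n) =>
      ∏ n, v r n (j n)))
    (u' : Fin R' → EuclideanSpace ℝ (Fin m))
    (v' : Fin R' → (n : Fin N) → EuclideanSpace ℝ (Fin (K n)))
    (heq : ∑ r, outer2 (w r) (v r) = ∑ r', outer2 (u' r') (v' r')) :
    R ≤ R' := by
  classical
  set c : Fin R → ((n : Fin N) → Fin (K n)) → ℝ :=
    fun r j => ∏ n, v r n (j n) with hcdef
  set col : ((n : Fin N) → Fin (K n)) → EuclideanSpace ℝ (Fin R) :=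
    fun j => WithLp.toLp 2 (fun r => c r j) with hcol
  have hT : ∀ (x : Fin m) (j : (n : Fin N) → Fin (K n)),
      ∑ r, w r x * c r j = ∑ r', u' r' x * (∏ n, v' r' n (j n)) := by
    intro x j
    have := congrArg (fun T => T (x, j)) heq
    rw [sum_apply', sum_apply'] at this
    exact this
  have hspan : Submodule.span ℝ (Set.range col) = ⊤ := by
    by_contra h
    have hbot : (Submodule.span ℝ (Set.range col))ᗮ ≠ ⊥ := by
      intro hb
      exact h (Submodule.orthogonal_eq_bot_iff.mp hb)
    obtain ⟨b, hb, hb0⟩ := Submodule.exists_mem_ne_zero_of_ne_bot hbot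
    have : ∀ j, (inner ℝ (col j) b : ℝ) = 0 := fun j =>
      (Submodule.mem_orthogonal _ b).mp hb (col j)
        (Submodule.subset_span (Set.mem_range_self j))
    have hz : ∀ r : Fin R, b r = 0 := by
      refine Fintype.linearIndependent_iff.mp hc b ?_
      funext j
      have h2 := this j
      simp only [PiLp.inner_apply, RCLike.inner_apply, starRingEnd_apply, star_trivial] at h2
      rw [Finset.sum_apply]
      simp only [Pi.smul_apply, smul_eq_mul, Pi.zero_apply]
      rw [← h2]
    exact hb0 (PiLp.ext hz)
  have hmem : ∀ s : Fin R, w s ∈ Submodule.span ℝ (Set.range u') := by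
    intro s
    have hsing : (EuclideanSpace.single s 1 : EuclideanSpace ℝ (Fin R))
        ∈ Submodule.span ℝ (Set.range col) := hspan ▸ Submodule.mem_top
    obtain ⟨a, ha⟩ := (Submodule.mem_span_range_iff_exists_fun ℝ).mp hsing
    have ha' : ∀ r, ∑ j, a j * c r j = (if r = s then (1:ℝ) else 0) := by
      intro r
      have h3 := congrArg (fun T => T r) ha
      rw [sum_apply'] at h3
      simpa [Pi.single_apply, mul_comm] using h3
    rw [Submodule.mem_span_range_iff_exists_fun]
    refine ⟨fun r' => ∑ j, a j * (∏ n, v' r' n (j n)), ?_⟩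
    ext x
    rw [sum_apply']
    simp only [PiLp.smul_apply, smul_eq_mul]
    calc ∑ r', (∑ j, a j * (∏ n, v' r' n (j n))) * u' r' x
        = ∑ r', ∑ j, a j * (u' r' x * (∏ n, v' r' n (j n))) := by
          refine Finset.sum_congr rfl fun r' _ => ?_
          rw [Finset.sum_mul]
          exact Finset.sum_congr rfl fun j _ => by ring
      _ = ∑ j, a j * ∑ r', u' r' x * (∏ n, v' r' n (j n)) := by
          rw [Finset.sum_comm]
          exact Finset.sum_congr rfl fun j _ => by rw [Finset.mul_sum]
      _ = ∑ j, a j * ∑ r, w r x * c r j := by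
          exact Finset.sum_congr rfl fun j _ => by rw [hT x j]
      _ = ∑ r, (∑ j, a j * c r j) * w r x := by
          simp_rw [Finset.mul_sum, Finset.sum_mul]
          rw [Finset.sum_comm]
          exact Finset.sum_congr rfl fun r _ => Finset.sum_congr rfl fun j _ => by ring
      _ = w s x := by
          rw [Finset.sum_congr rfl fun r (_ : r ∈ Finset.univ) => by rw [ha' r]]
          simp
  have hle : Submodule.span ℝ (Set.range w) ≤ Submodule.span ℝ (Set.range u') := by
    rw [Submodule.span_le]
    rintro _ ⟨s, rfl⟩
    exact hmem s
  have h1 : Module.finrank ℝ (Submodule.span ℝ (Set.range w)) = R := by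
    rw [finrank_span_eq_card hw, Fintype.card_fin]
  have h2 : Module.finrank ℝ (Submodule.span ℝ (Set.range u')) ≤ R' := by
    have := finrank_range_le_card (R := ℝ) u'
    rw [Set.finrank] at this
    simpa using this
  calc R = Module.finrank ℝ (Submodule.span ℝ (Set.range w)) := h1.symm
    _ ≤ Module.finrank ℝ (Submodule.span ℝ (Set.range u')) := Submodule.finrank_mono hle
    _ ≤ R' := h2

lemma exists_decomp {m : ℕ} (T : EuclideanSpace ℝ (Fin m × ((n : Fin N) → Fin (K n)))) :
    ∃ (R₀ : ℕ) (u : Fin R₀ → EuclideanSpace ℝ (Fin m))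
      (v : Fin R₀ → (n : Fin N) → EuclideanSpace ℝ (Fin (K n))),
      T = ∑ r, outer2 (u r) (v r) ∧
      ∀ s t : Fin R₀, s ≠ t →
        (inner ℝ (outer2 (u s) (v s)) (outer2 (u t) (v t)) : ℝ) = 0 := by
  classical
  set R₀ := Fintype.card (Fin m × ((n : Fin N) → Fin (K n))) with hR₀
  set e : Fin R₀ ≃ (Fin m × ((n : Fin N) → Fin (K n))) :=
    (Fintype.equivFin (Fin m × ((n : Fin N) → Fin (K n)))).symm with he
  refine ⟨R₀, fun r => WithLp.toLp 2 (fun x => if x = (e r).1 then T (e r) else 0),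
    fun r => fun n => WithLp.toLp 2 (fun k => if k = (e r).2 n then (1:ℝ) else 0), ?_, ?_⟩
  · have hout : ∀ (r : Fin R₀) (p : Fin m × ((n : Fin N) → Fin (K n))),
        outer2 (WithLp.toLp 2 (fun x => if x = (e r).1 then T (e r) else 0 : Fin m → ℝ))
          (fun n => WithLp.toLp 2 (fun k => if k = (e r).2 n then (1:ℝ) else 0)) p
        = if p = e r then T (e r) else 0 := by
      intro r p
      show (if p.1 = (e r).1 then T (e r) else 0) * (∏ n, if p.2 n = (e r).2 n then (1:ℝ) else 0)
        = if p = e r then T (e r) else 0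
      by_cases h1 : p.1 = (e r).1
      · by_cases h2 : p.2 = (e r).2
        · have hp : p = e r := Prod.ext h1 h2
          rw [if_pos h1, if_pos hp, Finset.prod_eq_one (fun n _ => if_pos (congrFun h2 n)),
            mul_one]
        · obtain ⟨n, hn⟩ : ∃ n, p.2 n ≠ (e r).2 n := by
            by_contra h; push_neg at h; exact h2 (funext h)
          have hp : p ≠ e r := fun hp => h2 (by rw [hp])
          rw [if_neg hp, Finset.prod_eq_zero (Finset.mem_univ n)
            (show (if p.2 n = (e r).2 n then (1:ℝ) else 0) = 0 from if_neg hn), mul_zero]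
      · have hp : p ≠ e r := fun hp => h1 (by rw [hp])
        rw [if_neg h1, if_neg hp, zero_mul]
    ext p
    rw [sum_apply']
    rw [Finset.sum_congr rfl fun r (_ : r ∈ Finset.univ) => hout r p]
    have : ∀ r : Fin R₀, p = e r ↔ e.symm p = r := by
      intro r; constructor
      · intro h; rw [h, Equiv.symm_apply_apply]
      · intro h; rw [← h, Equiv.apply_symm_apply]
    rw [Finset.sum_congr rfl fun r (_ : r ∈ Finset.univ) => by rw [if_congr (this r) rfl rfl]]
    rw [Finset.sum_ite_eq Finset.univ (e.symm p) (fun r => T (e r))]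
    rw [if_pos (Finset.mem_univ _), Equiv.apply_symm_apply]
  · intro s t hst
    rw [real_inner_comm]
    simp only [PiLp.inner_apply, RCLike.inner_apply, starRingEnd_apply, star_trivial]
    refine Finset.sum_eq_zero fun p _ => ?_
    show (if p.1 = (e s).1 then T (e s) else 0) * (∏ n, if p.2 n = (e s).2 n then (1:ℝ) else 0) *
      ((if p.1 = (e t).1 then T (e t) else 0) * (∏ n, if p.2 n = (e t).2 n then (1:ℝ) else 0)) = 0
    by_cases hs : p.1 = (e s).1 ∧ p.2 = (e s).2
    · have hpt : p = e t → False := by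
        intro h
        exact hst (e.injective (by rw [← h]; exact (Prod.ext hs.1 hs.2).symm))
      by_cases ht1 : p.1 = (e t).1
      · obtain ⟨n, hn⟩ : ∃ n, p.2 n ≠ (e t).2 n := by
          by_contra h; push_neg at h
          exact hpt (Prod.ext ht1 (funext h))
        exact mul_eq_zero_of_right _ (mul_eq_zero_of_right _
          (Finset.prod_eq_zero (Finset.mem_univ n) (if_neg hn)))
      · exact mul_eq_zero_of_right _ (mul_eq_zero_of_left (if_neg ht1) _)
    · rw [not_and_or] at hs
      rcases hs with hs | hs
      · exact mul_eq_zero_of_left (mul_eq_zero_of_left (if_neg hs) _) _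
      · obtain ⟨n, hn⟩ : ∃ n, p.2 n ≠ (e s).2 n := by
          by_contra h; push_neg at h; exact hs (funext h)
        exact mul_eq_zero_of_left (mul_eq_zero_of_right _
          (Finset.prod_eq_zero (Finset.mem_univ n)
            (show (if p.2 n = (e s).2 n then (1:ℝ) else 0) = 0 from if_neg hn))) _

open scoped MatrixOrder in
lemma gram_complement {i₁ R : ℕ} (u : Fin R → EuclideanSpace ℝ (Fin i₁)) :
    ∃ mm : Fin R → EuclideanSpace ℝ (Fin R), ∀ s t : Fin R, s ≠ t →
      (inner ℝ (u s) (u t) : ℝ) + (inner ℝ (mm s) (mm t) : ℝ) = 0 := by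
  classical
  set t₀ : ℝ := ∑ r, ‖u r‖ ^ 2 with ht₀
  set G : Matrix (Fin R) (Fin R) ℝ := Matrix.of fun s t => (inner ℝ (u s) (u t) : ℝ) with hG
  set M : Matrix (Fin R) (Fin R) ℝ := t₀ • (1 : Matrix (Fin R) (Fin R) ℝ) - G with hM
  have hHerm : M.IsHermitian := by
    show M.conjTranspose = M
    ext s t
    simp only [hM, Matrix.conjTranspose_apply, Matrix.sub_apply, Matrix.smul_apply,
      Matrix.one_apply, smul_eq_mul, star_trivial, hG, Matrix.of_apply]
    rw [real_inner_comm]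
    congr 1
    by_cases h : s = t
    · subst h; rfl
    · rw [if_neg h, if_neg (Ne.symm h)]
  have hPSD : M.PosSemidef := by
    refine Matrix.PosSemidef.of_dotProduct_mulVec_nonneg hHerm fun x => ?_
    have hstar : star x = x := by
      funext i; simp
    rw [hstar]
    set y : EuclideanSpace ℝ (Fin i₁) := ∑ r, x r • u r with hy
    have hyy : (inner ℝ y y : ℝ) = ∑ s, ∑ t, x s * x t * (inner ℝ (u s) (u t) : ℝ) := by
      rw [hy, sum_inner]
      refine Finset.sum_congr rfl fun s _ => ?_
      rw [inner_sum]
      refine Finset.sum_congr rfl fun t _ => ?_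
      rw [real_inner_smul_left, real_inner_smul_right]
      ring
    have hq : dotProduct x (M.mulVec x) = t₀ * (∑ s, x s ^ 2) - (inner ℝ y y : ℝ) := by
      rw [hyy]
      unfold dotProduct Matrix.mulVec
      simp only [hM, Matrix.sub_apply, Matrix.smul_apply, Matrix.one_apply, smul_eq_mul,
        hG, Matrix.of_apply]
      rw [Finset.mul_sum, ← Finset.sum_sub_distrib]
      refine Finset.sum_congr rfl fun s _ => ?_
      unfold dotProduct
      rw [Finset.mul_sum]
      have h2 : ∀ t : Fin R, x s * ((fun j => (t₀ * if s = j then (1:ℝ) else 0)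
              - (inner ℝ (u s) (u j) : ℝ)) t * x t)
          = (if s = t then t₀ * (x s * x t) else 0) - x s * x t * (inner ℝ (u s) (u t) : ℝ) := by
        intro t
        by_cases h : s = t
        · simp only [if_pos h]; ring
        · simp only [if_neg h]; ring
      rw [Finset.sum_congr rfl fun t _ => h2 t, Finset.sum_sub_distrib,
        Finset.sum_ite_eq Finset.univ s (fun t => t₀ * (x s * x t)),
        if_pos (Finset.mem_univ s)]
      ring
    rw [hq]
    have hnorm : ‖y‖ ≤ ∑ r, |x r| * ‖u r‖ := by
      refine le_trans (norm_sum_le _ _) ?_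
      refine Finset.sum_le_sum fun r _ => ?_
      rw [norm_smul, Real.norm_eq_abs]
    have hcs : (∑ r, |x r| * ‖u r‖) ^ 2 ≤ (∑ r, x r ^ 2) * t₀ := by
      have := Finset.sum_mul_sq_le_sq_mul_sq Finset.univ (fun r => |x r|) (fun r => ‖u r‖)
      simpa [sq_abs] using this
    have h0 : (0:ℝ) ≤ ∑ r, |x r| * ‖u r‖ :=
      Finset.sum_nonneg fun r _ => mul_nonneg (abs_nonneg _) (norm_nonneg _)
    have hyn : (inner ℝ y y : ℝ) = ‖y‖ ^ 2 := real_inner_self_eq_norm_sq y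
    nlinarith [norm_nonneg y]
  obtain ⟨P, hP⟩ : ∃ P : Matrix (Fin R) (Fin R) ℝ, M = P.conjTranspose * P := by
    obtain ⟨B, hB⟩ := CStarAlgebra.nonneg_iff_eq_star_mul_self.mp hPSD.nonneg
    exact ⟨B, hB⟩
  set mm : Fin R → EuclideanSpace ℝ (Fin R) := fun r => WithLp.toLp 2 (fun i => P i r) with hmm
  refine ⟨mm, fun s t hst => ?_⟩
  have hPM : (inner ℝ (mm s) (mm t) : ℝ) = M s t := by
    simp only [PiLp.inner_apply, RCLike.inner_apply, starRingEnd_apply, star_trivial]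
    rw [hP]
    simp [hmm, Matrix.mul_apply, Matrix.conjTranspose_apply, mul_comm]
  rw [hPM]
  simp only [hM, Matrix.sub_apply, Matrix.smul_apply, Matrix.one_apply, smul_eq_mul,
    hG, Matrix.of_apply, if_neg hst, mul_zero]
  ring

end Aux

/-- A subtensor may have larger orthogonal rank than the whole tensor: if
`A = [[V^{(1)},…,V^{(N)}]]` has full-column-rank factor matrices, `R ≥ 2`, a unique
rank-`R` decomposition, and a non-diagonal Hadamard product of Gram matrices
(so `rank_⊥(A) > R`), then there is a tensor `B`, obtained by enlarging the first
mode (so that `A` is the subtensor of `B` given by restricting the first index),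
with `rank_⊥(B) = R < rank_⊥(A)`. -/
theorem exists_supertensor_smaller_orank {i₁ N R : ℕ} {K : Fin N → ℕ}
    (u : Fin R → EuclideanSpace ℝ (Fin i₁))
    (v : Fin R → (n : Fin N) → EuclideanSpace ℝ (Fin (K n)))
    (A : EuclideanSpace ℝ (Fin i₁ × ((n : Fin N) → Fin (K n))))
    (hA : A = ∑ r, outer2 (u r) (v r))
    (hR : 2 ≤ R)
    (hfull1 : LinearIndependent ℝ u)
    (hfull : ∀ n : Fin N, LinearIndependent ℝ (fun r : Fin R => v r n))
    (hnd : ¬ (Matrix.of fun s t : Fin R =>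
        (inner ℝ (u s) (u t) : ℝ) * ∏ n, (inner ℝ (v s n) (v t n) : ℝ)).IsDiag)
    (hunique : ∀ (u' : Fin R → EuclideanSpace ℝ (Fin i₁))
        (v' : Fin R → (n : Fin N) → EuclideanSpace ℝ (Fin (K n))),
      A = ∑ r, outer2 (u' r) (v' r) →
        ∃ π : Equiv.Perm (Fin R), ∀ r,
          outer2 (u' r) (v' r) = outer2 (u (π r)) (v (π r))) :
    ∃ B : EuclideanSpace ℝ (Fin (i₁ + R) × ((n : Fin N) → Fin (K n))),
      (∀ (x : Fin i₁) (j : (n : Fin N) → Fin (K n)),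
        B (Fin.castAdd R x, j) = A (x, j)) ∧
      orank2 B = R ∧ orank2 B < orank2 A := by
  classical
  rcases Nat.eq_zero_or_pos N with hN | hNpos
  · -- the hypotheses are contradictory when N = 0
    exfalso
    subst hN
    set j₀ : (n : Fin 0) → Fin (K n) := fun n => n.elim0 with hj₀
    set z0 : Fin R := ⟨0, by omega⟩ with hz0
    set A0 : EuclideanSpace ℝ (Fin i₁) := WithLp.toLp 2 (fun x => A (x, j₀)) with hA0
    set u' : Fin R → EuclideanSpace ℝ (Fin i₁) := fun r => if r = z0 then A0 else 0 with hu'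
    have hdec : A = ∑ r, outer2 (u' r) (fun n : Fin 0 => n.elim0) := by
      ext p
      rw [sum_apply']
      have hev : ∀ r : Fin R, outer2 (u' r) (fun n : Fin 0 => n.elim0) p = u' r p.1 := by
        intro r
        show u' r p.1 * ∏ n : Fin 0, _ = u' r p.1
        simp
      rw [Finset.sum_congr rfl fun r _ => hev r]
      have : ∀ r : Fin R, u' r p.1 = if r = z0 then A0 p.1 else 0 := by
        intro r
        by_cases h : r = z0
        · simp only [hu', if_pos h]
        · simp only [hu', if_neg h]; rfl
      rw [Finset.sum_congr rfl fun r _ => this r,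
        Finset.sum_ite_eq' Finset.univ z0 (fun _ => A0 p.1), if_pos (Finset.mem_univ _)]
      have hp : p = (p.1, j₀) := by
        ext
        · rfl
        · exact Fin.elim0 (by assumption)
      show A p = A (p.1, j₀)
      exact congrArg A hp
    obtain ⟨π, hπ⟩ := hunique u' (fun _ => fun n : Fin 0 => n.elim0) hdec
    set r1 : Fin R := ⟨1, by omega⟩ with hr1
    have h10 : r1 ≠ z0 := by
      intro h
      have := congrArg Fin.val h
      simp [hr1, hz0] at this
    have hzero : ∀ x, u (π r1) x = 0 := by
      intro x
      have h := congrArg (fun T => T (x, j₀)) (hπ r1)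
      rw [outer2_apply, outer2_apply] at h
      simp only [hu', if_neg h10] at h
      have : (0:ℝ) * ∏ n : Fin 0, (fun n : Fin 0 => n.elim0 : (n : Fin 0) → EuclideanSpace ℝ (Fin (K n))) n (j₀ n) = u (π r1) x * ∏ n : Fin 0, v (π r1) n (j₀ n) := h
      simpa using this.symm
    exact hfull1.ne_zero (π r1) (PiLp.ext hzero)
  · have n₀ : Fin N := ⟨0, hNpos⟩
    obtain ⟨mm, hmm⟩ := gram_complement u
    set w : Fin R → EuclideanSpace ℝ (Fin (i₁ + R)) :=
      fun r => (WithLp.equiv 2 _).symm (Fin.append (u r) (mm r)) with hw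
    have hwl : ∀ (r : Fin R) (x : Fin i₁), w r (Fin.castAdd R x) = u r x := by
      intro r x
      exact Fin.append_left (u r) (mm r) x
    have hwr : ∀ (r : Fin R) (i : Fin R), w r (Fin.natAdd i₁ i) = mm r i := by
      intro r i
      exact Fin.append_right (u r) (mm r) i
    set B : EuclideanSpace ℝ (Fin (i₁ + R) × ((n : Fin N) → Fin (K n))) :=
      ∑ r, outer2 (w r) (v r) with hB
    have hsub : ∀ (x : Fin i₁) (j : (n : Fin N) → Fin (K n)),
        B (Fin.castAdd R x, j) = A (x, j) := by
      intro x j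
      rw [hB, sum_apply', hA, sum_apply']
      refine Finset.sum_congr rfl fun r _ => ?_
      rw [outer2_apply, outer2_apply]
      rw [hwl r x]
    have hinnerw : ∀ s t : Fin R, s ≠ t → (inner ℝ (w s) (w t) : ℝ) = 0 := by
      intro s t hst
      have hmst := hmm s t hst
      rw [real_inner_comm (u t), real_inner_comm (mm t)] at hmst
      rw [real_inner_comm (w t)]
      simp only [PiLp.inner_apply, RCLike.inner_apply, starRingEnd_apply, star_trivial]
        at hmst ⊢
      rw [Fin.sum_univ_add]
      have e1 : ∑ i : Fin i₁, w s (Fin.castAdd R i) * w t (Fin.castAdd R i)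
          = ∑ i : Fin i₁, u s i * u t i :=
        Finset.sum_congr rfl fun i _ => by rw [hwl s i, hwl t i]
      have e2 : ∑ i : Fin R, w s (Fin.natAdd i₁ i) * w t (Fin.natAdd i₁ i)
          = ∑ i : Fin R, mm s i * mm t i :=
        Finset.sum_congr rfl fun i _ => by rw [hwr s i, hwr t i]
      rw [e1, e2]
      exact hmst
    have horthB : ∀ s t : Fin R, s ≠ t →
        (inner ℝ (outer2 (w s) (v s)) (outer2 (w t) (v t)) : ℝ) = 0 := by
      intro s t hst
      rw [inner_outer2, hinnerw s t hst, zero_mul]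
    have hwind : LinearIndependent ℝ w := by
      rw [Fintype.linearIndependent_iff]
      intro g hg
      refine Fintype.linearIndependent_iff.mp hfull1 g ?_
      ext x
      show (∑ i, g i • u i) x = (0:ℝ)
      have h2 : (∑ i : Fin R, g i • w i) (Fin.castAdd R x) = (0:ℝ) := congrArg (fun T => T (Fin.castAdd R x)) hg
      rw [sum_apply'] at h2
      simp only [Pi.smul_apply, smul_eq_mul] at h2
      rw [sum_apply']
      simp only [Pi.smul_apply, smul_eq_mul]
      rw [← h2]
      refine Finset.sum_congr rfl fun r _ => ?_
      show g r * u r x = g r * w r (Fin.castAdd R x)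
      rw [hwl r x]
    have hc := prod_indep n₀ v hfull
    have hmemB : R ∈ {R' : ℕ | ∃ u'' : Fin R' → EuclideanSpace ℝ (Fin (i₁ + R)),
        ∃ v'' : Fin R' → (n : Fin N) → EuclideanSpace ℝ (Fin (K n)),
        B = ∑ r, outer2 (u'' r) (v'' r) ∧
        ∀ s t : Fin R', s ≠ t →
          (inner ℝ (outer2 (u'' s) (v'' s)) (outer2 (u'' t) (v'' t)) : ℝ) = 0} :=
      ⟨w, v, hB, horthB⟩
    have hBle : orank2 B ≤ R := Nat.sInf_le hmemB
    have hBge : R ≤ orank2 B := by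
      have hBmem := Nat.sInf_mem (⟨R, hmemB⟩ : Set.Nonempty _)
      obtain ⟨u'', v'', hdec'', -⟩ := hBmem
      refine rank_lb w v hwind hc u'' v'' ?_
      rw [← hB]
      exact hdec''
    have hBeq : orank2 B = R := le_antisymm hBle hBge
    obtain ⟨R₀, u₀, v₀, hd₀, ho₀⟩ := exists_decomp A
    have hAne : Set.Nonempty {R' : ℕ | ∃ u' : Fin R' → EuclideanSpace ℝ (Fin i₁),
        ∃ v' : Fin R' → (n : Fin N) → EuclideanSpace ℝ (Fin (K n)),
        A = ∑ r, outer2 (u' r) (v' r) ∧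
        ∀ s t : Fin R', s ≠ t →
          (inner ℝ (outer2 (u' s) (v' s)) (outer2 (u' t) (v' t)) : ℝ) = 0} :=
      ⟨R₀, u₀, v₀, hd₀, ho₀⟩
    have hAmem := Nat.sInf_mem hAne
    obtain ⟨u', v', hdec', horth'⟩ := hAmem
    have hgeA : R ≤ orank2 A := by
      refine rank_lb u v hfull1 hc u' v' ?_
      rw [← hA]
      exact hdec'
    have hneq : orank2 A ≠ R := by
      intro hEq
      set e : Fin (orank2 A) ≃ Fin R := finCongr hEq with hee
      set u₂ : Fin R → EuclideanSpace ℝ (Fin i₁) := fun r => u' (e.symm r) with hu₂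
      set v₂ : Fin R → (n : Fin N) → EuclideanSpace ℝ (Fin (K n)) :=
        fun r => v' (e.symm r) with hv₂
      have hdec₂ : A = ∑ r, outer2 (u₂ r) (v₂ r) := by
        rw [hdec']
        refine Fintype.sum_equiv e _ _ fun r => ?_
        rw [hu₂, hv₂]
        simp
      obtain ⟨π, hπ⟩ := hunique u₂ v₂ hdec₂
      apply hnd
      intro s t hst
      show (inner ℝ (u s) (u t) : ℝ) * ∏ n, (inner ℝ (v s n) (v t n) : ℝ) = 0
      rw [← inner_outer2]
      have hs' := hπ (π.symm s)
      rw [Equiv.apply_symm_apply] at hs'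
      have ht' := hπ (π.symm t)
      rw [Equiv.apply_symm_apply] at ht'
      rw [← hs', ← ht']
      refine horth' (e.symm (π.symm s)) (e.symm (π.symm t)) ?_
      intro h
      exact hst (π.symm.injective (e.symm.injective h))
    refine ⟨B, hsub, hBeq, ?_⟩
    omega
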